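/- For every iteration i and all pairs (u,v), (u',v') of vertices of a finite simple graph G, if F_i(u,v) = F_i(u',v') then O_i(u,v) = O_i(u',v'). That is, at every iteration the 2-FWL coloring refines the 2-OWL coloring. -/

import Mathlib

/-- Color type for the 2-FWL coloring at iteration `i`. -/
def FColor : ℕ → Type
  | 0 => Bool × Bool
  | (i+1) => FColor i × Multiset (FColor i × FColor i)

/-- Color type for the 2-OWL coloring at iteration `i`. -/
def OColor : ℕ → Type
  | 0 => Bool × Bool
  | (i+1) => OColor i × Multiset (OColor i) × Multiset (OColor i)

/-- Atomic type of an ordered pair `(u,v)`: the pair of Booleans `(u = v, u ~ v)`. -/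
def atomicType {V : Type*} [DecidableEq V] (G : SimpleGraph V) [DecidableRel G.Adj]
    (u v : V) : Bool × Bool :=
  (decide (u = v), decide (G.Adj u v))

/-- The 2-FWL coloring: `F_0(u,v)` is the atomic type of `(u,v)`, and
`F_{i+1}(u,v) = (F_i(u,v), ⟦(F_i(w,v), F_i(u,w)) : w ∈ V⟧)`. -/
def fwl {V : Type*} [Fintype V] [DecidableEq V] (G : SimpleGraph V) [DecidableRel G.Adj] :
    (i : ℕ) → V → V → FColor i
  | 0 => fun u v => atomicType G u v
  | (i+1) => fun u v =>
      (fwl G i u v,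
       (Finset.univ.val : Multiset V).map (fun w => (fwl G i w v, fwl G i u w)))

/-- The 2-OWL coloring: `O_0(u,v)` is the atomic type of `(u,v)`, and
`O_{i+1}(u,v) = (O_i(u,v), ⟦O_i(w,v) : w ∈ V⟧, ⟦O_i(u,w) : w ∈ V⟧)`. -/
def owl {V : Type*} [Fintype V] [DecidableEq V] (G : SimpleGraph V) [DecidableRel G.Adj] :
    (i : ℕ) → V → V → OColor i
  | 0 => fun u v => atomicType G u v
  | (i+1) => fun u v =>
      (owl G i u v,
       (Finset.univ.val : Multiset V).map (fun w => owl G i w v),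
       (Finset.univ.val : Multiset V).map (fun w => owl G i u w))


/-- A 2-FWL color determines the 2-OWL color: project each multiset of pairs onto its
two components. -/
def FColor.toOColor : (i : ℕ) → FColor i → OColor i
  | 0 => fun c => c
  | (i+1) => fun c =>
      (toOColor i c.1, c.2.map (fun p => toOColor i p.1), c.2.map (fun p => toOColor i p.2))

theorem owl_eq_toOColor_fwl {V : Type*} [Fintype V] [DecidableEq V]
    (G : SimpleGraph V) [DecidableRel G.Adj] (i : ℕ) (u v : V) :
    owl G i u v = FColor.toOColor i (fwl G i u v) := by
  induction i generalizing u v with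
  | zero => rfl
  | succ i ih =>
    simp only [owl, fwl, FColor.toOColor, Multiset.map_map, Function.comp_def, ih]
    rfl

/-- At every iteration, the 2-FWL coloring refines the 2-OWL coloring: if
`F_i(u,v) = F_i(u',v')` then `O_i(u,v) = O_i(u',v')`. -/
theorem stmt_5 {V : Type*} [Fintype V] [DecidableEq V]
    (G : SimpleGraph V) [DecidableRel G.Adj] :
    ∀ (i : ℕ) (u v u' v' : V),
      fwl G i u v = fwl G i u' v' → owl G i u v = owl G i u' v' := by
  intro i u v u' v' h
  rw [owl_eq_toOColor_fwl, owl_eq_toOColor_fwl, h]
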